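/- There exist g ∈ (0,1/2) and r ∈ (0,1) such that (1 − 2g(1−r))² < E(4g r²/(1+r⁴))². (That is, the source-entanglement monogamy relation E_s² ≥ E₁₂² + E₁₃² + E₂₃² is violated by some non-generic GHZ-class states ψ(g₁,0,0,r) with r ∈ (0,1).) -/

import Mathlib

/-- Binary Shannon entropy (base 2), with the convention `0 * log₂ 0 = 0`
(automatic since `Real.logb 2 0 = 0`). -/
noncomputable def binEntropy (p : ℝ) : ℝ :=
  -p * Real.logb 2 p - (1 - p) * Real.logb 2 (1 - p)

/-- Entanglement-of-formation function of the concurrence `C`. -/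
noncomputable def eof (C : ℝ) : ℝ :=
  binEntropy ((1 + Real.sqrt (1 - C ^ 2)) / 2)

/-!
Choose `r` slightly below `4/5` and `g` slightly below `1/2`. Then `E_s ≈ r < 4/5`, while the
concurrence exceeds `√3/2`. Since `E` is monotone, `E(C) ≥ E(√3/2) = h(3/4) = 2 - (3/4) log₂ 3`,
and `3⁵ < 2⁸` gives `log₂ 3 < 8/5`, hence `E(C) > 4/5`.
-/

lemma binEntropy_eq_div_log_two (p : ℝ) : binEntropy p = Real.binEntropy p / Real.log 2 := by
  simp only [binEntropy, Real.binEntropy, Real.logb, Real.log_inv]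
  ring

lemma eof_monotoneOn : MonotoneOn eof (Set.Ici 0) := by
  intro C hC C' _ hCC'
  have hsqrt : √(1 - C' ^ 2) ≤ √(1 - C ^ 2) := by gcongr
  have hsqrt_le_one : √(1 - C ^ 2) ≤ 1 :=
    Real.sqrt_le_one.mpr (by nlinarith)
  have hsqrt'_nonneg : 0 ≤ √(1 - C' ^ 2) := Real.sqrt_nonneg _
  simp only [eof, binEntropy_eq_div_log_two]
  gcongr
  exact Real.binEntropy_strictAntiOn.antitoneOn
    ⟨by linarith, by linarith⟩ ⟨by linarith, by linarith⟩ (by linarith)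

lemma eof_sqrt_three_div_two : eof (√3 / 2) = binEntropy (3 / 4) := by
  have hsq : (1 : ℝ) - (√3 / 2) ^ 2 = (1 / 2) ^ 2 := by
    rw [div_pow, Real.sq_sqrt (by norm_num)]
    norm_num
  rw [eof, hsq, Real.sqrt_sq (by norm_num)]
  norm_num

lemma Real.binEntropy_three_div_four :
    Real.binEntropy (3 / 4) = 2 * Real.log 2 - 3 / 4 * Real.log 3 := by
  have h4 : Real.log 4 = 2 * Real.log 2 := by
    rw [show (4 : ℝ) = 2 ^ 2 by norm_num, Real.log_pow]
    norm_num
  rw [Real.binEntropy, show (1 : ℝ) - 3 / 4 = 4⁻¹ by norm_num, inv_inv, inv_div,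
    Real.log_div (by norm_num) (by norm_num), h4]
  ring

lemma five_mul_log_three_lt_eight_mul_log_two : 5 * Real.log 3 < 8 * Real.log 2 := by
  have h : Real.log (3 ^ 5) < Real.log (2 ^ 8) := Real.log_lt_log (by norm_num) (by norm_num)
  simpa only [Real.log_pow, Nat.cast_ofNat] using h

lemma four_div_five_lt_binEntropy_three_div_four : 4 / 5 < binEntropy (3 / 4) := by
  have hlog2 : 0 < Real.log 2 := Real.log_pos one_lt_two
  rw [binEntropy_eq_div_log_two, Real.binEntropy_three_div_four, lt_div_iff₀ hlog2]
  linarith [five_mul_log_three_lt_eight_mul_log_two]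

/-- The source-entanglement monogamy relation is violated by some non-generic
GHZ-class states `ψ(g,0,0,r)` with `r ∈ (0,1)`. -/
theorem exists_source_monogamy_violation :
    ∃ g ∈ Set.Ioo (0 : ℝ) (1 / 2), ∃ r ∈ Set.Ioo (0 : ℝ) 1,
      (1 - 2 * g * (1 - r)) ^ 2 < (eof (4 * g * r ^ 2 / (1 + r ^ 4))) ^ 2 := by
  refine ⟨99 / 200, by norm_num, 39 / 50, by norm_num, ?_⟩
  set C : ℝ := 4 * (99 / 200) * (39 / 50) ^ 2 / (1 + (39 / 50) ^ 4)
  have hC : √3 / 2 ≤ C := by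
    rw [div_le_iff₀ two_pos, Real.sqrt_le_iff]
    norm_num [C]
  have hE : 4 / 5 < eof C := by
    calc 4 / 5 < binEntropy (3 / 4) := four_div_five_lt_binEntropy_three_div_four
      _ = eof (√3 / 2) := eof_sqrt_three_div_two.symm
      _ ≤ eof C := eof_monotoneOn (by positivity : (0 : ℝ) ≤ √3 / 2)
          ((by positivity : (0 : ℝ) ≤ √3 / 2).trans hC) hC
  have hEs : 1 - 2 * (99 / 200 : ℝ) * (1 - 39 / 50) < 4 / 5 := by norm_num
  exact pow_lt_pow_left₀ (hEs.trans hE) (by norm_num) two_ne_zero
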